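/- arXiv:math/0401267 — 2 statements merged into one kernel-verified Lean document; each statement's English description precedes it below -/
import Mathlib

section
/- Let U ⊆ ℂ be open and let ξ, μ : ℂ → ℂ be holomorphic on U such that w(z) := conj(ξ(z)) − μ(z) ≠ 0 for every z ∈ U, and suppose that ξ′(z) · μ′(z) = 1/4 for every z ∈ U. Then for every z ∈ U one has |Δ(log |w|)(z)| ≤ 1 / |w(z)|². -/
/-- Partial derivative in the direction of `1` (the `x`-direction) of `u : ℂ → ℝ`. -/
noncomputable def pdx (u : ℂ → ℝ) (z : ℂ) : ℝ := fderiv ℝ u z 1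

/-- Partial derivative in the direction of `I` (the `y`-direction) of `u : ℂ → ℝ`. -/
noncomputable def pdy (u : ℂ → ℝ) (z : ℂ) : ℝ := fderiv ℝ u z Complex.I

/-- The flat Laplacian `Δu = ∂²u/∂x² + ∂²u/∂y²` of `u : ℂ → ℝ`. -/
noncomputable def lap (u : ℂ → ℝ) (z : ℂ) : ℝ := pdx (pdx u) z + pdy (pdy u) z

/-!
Differentiating `log ‖w‖` twice in a direction `v` gives `Re ((w_vv w - w_v²) / w²)`. For
`w = conj ξ - μ` with `ξ, μ` holomorphic, `w_v = conj (ξ' v) - μ' v` and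
`w_vv = conj (ξ'' v²) - μ'' v²`, so adding the directions `v = 1` and `v = i` cancels the
second-order terms and leaves `Δ log ‖w‖ = Re (4 conj ξ' μ' / w²)`, whose numerator has modulus
`4 |ξ' μ'| = 1`.
-/

open Complex ComplexConjugate Filter

section RealDifferentiable

variable {E : Type*} [NormedAddCommGroup E] [NormedSpace ℝ E] {f g : E → ℂ} {x : E}

theorem fderiv_re_div_apply (hf : DifferentiableAt ℝ f x) (hg : DifferentiableAt ℝ g x)
    (hg0 : g x ≠ 0) (v : E) :
    fderiv ℝ (fun y => (f y / g y).re) x v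
      = ((fderiv ℝ f x v * g x - f x * fderiv ℝ g x v) / g x ^ 2).re := by
  have h : HasFDerivAt (fun y => (f y / g y).re) _ x := reCLM.hasFDerivAt.comp x
    (hf.hasFDerivAt.fun_mul ((hasFDerivAt_inv' hg0).comp x hg.hasFDerivAt))
  rw [h.fderiv]
  simp only [ContinuousLinearMap.comp_apply, reCLM_apply]
  congr 1
  simp only [ContinuousLinearMap.neg_comp, smul_neg, Function.comp_apply, add_apply, neg_apply,
    smul_apply, ContinuousLinearMap.comp_apply, ContinuousLinearMap.mulLeftRight_apply,
    smul_eq_mul]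
  field_simp
  ring

theorem fderiv_log_norm_apply (hf : DifferentiableAt ℝ f x) (hf0 : f x ≠ 0) (v : E) :
    fderiv ℝ (fun y => Real.log ‖f y‖) x v = (fderiv ℝ f x v / f x).re := by
  have h := (hf.hasFDerivAt.norm_sq.log (by positivity)).const_mul (2⁻¹ : ℝ)
  have hlog : ∀ y, 2⁻¹ * Real.log (‖f y‖ ^ 2) = Real.log ‖f y‖ := fun y => by
    rw [Real.log_pow]; push_cast; ring
  rw [(h.congr_of_eventuallyEq (.of_forall fun y => (hlog y).symm)).fderiv]
  simp only [smul_apply, ContinuousLinearMap.comp_apply, coe_innerSL_apply, Complex.inner,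
    mul_re, conj_re, conj_im, mul_neg, sub_neg_eq_add, smul_add, nsmul_eq_mul, Nat.cast_ofNat,
    smul_eq_mul, div_re, normSq_eq_norm_sq]
  field_simp

end RealDifferentiable

section ConjSub

variable {ξ μ : ℂ → ℂ} {z : ℂ}

theorem DifferentiableAt.conj_sub (hξ : DifferentiableAt ℂ ξ z) (hμ : DifferentiableAt ℂ μ z) :
    DifferentiableAt ℝ (fun x => conj (ξ x) - μ x) z :=
  (hξ.restrictScalars ℝ).star.sub (hμ.restrictScalars ℝ)

theorem fderiv_conj_sub_apply (hξ : DifferentiableAt ℂ ξ z) (hμ : DifferentiableAt ℂ μ z)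
    (v : ℂ) :
    fderiv ℝ (fun x => conj (ξ x) - μ x) z v = conj (deriv ξ z * v) - deriv μ z * v := by
  have h : HasFDerivAt (fun x => conj (ξ x) - μ x) _ z :=
    (hξ.restrictScalars ℝ).hasFDerivAt.star.sub (hμ.restrictScalars ℝ).hasFDerivAt
  rw [h.fderiv]
  simp [hξ.fderiv_restrictScalars ℝ, hμ.fderiv_restrictScalars ℝ, mul_comm]

theorem fderiv_fderiv_log_norm_conj_sub_apply {U : Set ℂ} (hU : IsOpen U)
    (hξ : DifferentiableOn ℂ ξ U) (hμ : DifferentiableOn ℂ μ U)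
    (hw0 : ∀ z ∈ U, conj (ξ z) - μ z ≠ 0) (hz : z ∈ U) (v : ℂ) :
    fderiv ℝ (fun x => fderiv ℝ (fun y => Real.log ‖conj (ξ y) - μ y‖) x v) z v
      = (((conj (deriv (deriv ξ) z * v * v) - deriv (deriv μ) z * v * v) * (conj (ξ z) - μ z)
          - (conj (deriv ξ z * v) - deriv μ z * v) ^ 2) / (conj (ξ z) - μ z) ^ 2).re := by
  have hξ' := (hξ.analyticOnNhd hU).deriv
  have hμ' := (hμ.analyticOnNhd hU).deriv
  have hξd : ∀ x ∈ U, DifferentiableAt ℂ ξ x := fun x hx => hξ.differentiableAt (hU.mem_nhds hx)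
  have hμd : ∀ x ∈ U, DifferentiableAt ℂ μ x := fun x hx => hμ.differentiableAt (hU.mem_nhds hx)
  have hξ'v : DifferentiableAt ℂ (fun x => deriv ξ x * v) z :=
    (hξ' z hz).differentiableAt.mul_const v
  have hμ'v : DifferentiableAt ℂ (fun x => deriv μ x * v) z :=
    (hμ' z hz).differentiableAt.mul_const v
  have hpdv : (fun x => fderiv ℝ (fun y => Real.log ‖conj (ξ y) - μ y‖) x v)
      =ᶠ[nhds z] fun x => ((conj (deriv ξ x * v) - deriv μ x * v) / (conj (ξ x) - μ x)).re :=
    eventually_of_mem (hU.mem_nhds hz) fun x hx => by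
      dsimp only
      rw [fderiv_log_norm_apply ((hξd x hx).conj_sub (hμd x hx)) (hw0 x hx),
        fderiv_conj_sub_apply (hξd x hx) (hμd x hx)]
  rw [hpdv.fderiv_eq,
    fderiv_re_div_apply (hξ'v.conj_sub hμ'v) ((hξd z hz).conj_sub (hμd z hz)) (hw0 z hz),
    fderiv_conj_sub_apply hξ'v hμ'v, fderiv_conj_sub_apply (hξd z hz) (hμd z hz),
    deriv_mul_const (hξ' z hz).differentiableAt, deriv_mul_const (hμ' z hz).differentiableAt]
  ring_nf

theorem lap_log_norm_conj_sub {U : Set ℂ} (hU : IsOpen U)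
    (hξ : DifferentiableOn ℂ ξ U) (hμ : DifferentiableOn ℂ μ U)
    (hw0 : ∀ z ∈ U, conj (ξ z) - μ z ≠ 0) (hz : z ∈ U) :
    lap (fun y => Real.log ‖conj (ξ y) - μ y‖) z
      = (4 * conj (deriv ξ z) * deriv μ z / (conj (ξ z) - μ z) ^ 2).re := by
  unfold lap pdx pdy
  rw [fderiv_fderiv_log_norm_conj_sub_apply hU hξ hμ hw0 hz,
    fderiv_fderiv_log_norm_conj_sub_apply hU hξ hμ hw0 hz, ← add_re]
  congr 1
  have hw := hw0 z hz
  simp only [map_mul, map_one, conj_I]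
  field_simp
  ring_nf
  simp only [I_sq]
  ring

end ConjSub

/-- If `ξ, μ` are holomorphic on an open set `U ⊆ ℂ`, `w = conj ∘ ξ − μ` never vanishes on `U`,
and `ξ' μ' = 1/4` on `U`, then `|Δ (log |w|)| ≤ 1 / |w|²` on `U`. -/
theorem abs_laplacian_log_abs_w_le
    (U : Set ℂ) (hU : IsOpen U) (ξ μ : ℂ → ℂ)
    (hξ : DifferentiableOn ℂ ξ U) (hμ : DifferentiableOn ℂ μ U)
    (w : ℂ → ℂ) (hw : ∀ z, w z = (starRingEnd ℂ) (ξ z) - μ z)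
    (hw0 : ∀ z ∈ U, w z ≠ 0)
    (hWeier : ∀ z ∈ U, deriv ξ z * deriv μ z = 1 / 4) :
    ∀ z ∈ U,
      |lap (fun z => Real.log ‖w z‖) z| ≤ 1 / ‖w z‖ ^ 2 := by
  intro z hz
  obtain rfl : w = fun z => conj (ξ z) - μ z := funext hw
  rw [lap_log_norm_conj_sub hU hξ hμ hw0 hz]
  have hnum : ‖4 * conj (deriv ξ z) * deriv μ z‖ = 1 := by
    rw [norm_mul, norm_mul, norm_conj, mul_assoc, ← norm_mul, hWeier z hz]
    norm_num
  calc _ ≤ ‖4 * conj (deriv ξ z) * deriv μ z / (conj (ξ z) - μ z) ^ 2‖ := abs_re_le_norm _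
    _ = _ := by rw [norm_div, norm_pow, hnum]
end

section
/- Let U ⊆ ℂ be open, let X = (X₁, X₂, X₃) : ℂ → ℝ³ be a conformal harmonic immersion on U, and suppose X₁(z)² + X₂(z)² ≥ 1 + X₃(z)² for every z ∈ U. Then for every real constant c, the function h_c(z) = ½·log(X₁(z)² + X₂(z)²) + c·X₃(z) + f(X₃(z)) satisfies Δ h_c ≤ 0 on U, i.e. h_c is superharmonic on U. -/
open Filter Topology

section DirectionalDerivative

variable {E : Type*} [NormedAddCommGroup E] [NormedSpace ℝ E] {u v : E → ℝ} {z : E}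

theorem ContDiffAt.eventually_differentiableAt (hu : ContDiffAt ℝ 2 u z) :
    ∀ᶠ w in 𝓝 z, DifferentiableAt ℝ u w :=
  (hu.eventually (by simp)).mono fun _ hw => hw.differentiableAt (by norm_num)

theorem ContDiffAt.differentiableAt_fderiv_apply (hu : ContDiffAt ℝ 2 u z) (d : E) :
    DifferentiableAt ℝ (fun w => fderiv ℝ u w d) z :=
  ((hu.fderiv_right (m := 1) (by norm_num)).differentiableAt (by norm_num)).clm_apply
    (differentiableAt_const d)

theorem fderiv_fderiv_add_apply (hu : ContDiffAt ℝ 2 u z) (hv : ContDiffAt ℝ 2 v z) (d : E) :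
    fderiv ℝ (fun w => fderiv ℝ (fun x => u x + v x) w d) z d
      = fderiv ℝ (fun w => fderiv ℝ u w d) z d + fderiv ℝ (fun w => fderiv ℝ v w d) z d := by
  have hfirst : (fun w => fderiv ℝ (fun x => u x + v x) w d)
      =ᶠ[𝓝 z] fun w => fderiv ℝ u w d + fderiv ℝ v w d := by
    filter_upwards [hu.eventually_differentiableAt, hv.eventually_differentiableAt]
      with w huw hvw
    simp [fderiv_fun_add huw hvw]
  rw [hfirst.fderiv_eq, fderiv_fun_add (hu.differentiableAt_fderiv_apply d)
    (hv.differentiableAt_fderiv_apply d)]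
  rfl

theorem fderiv_fderiv_comp_apply {φ φ' : ℝ → ℝ} {φ'' : ℝ} (hu : ContDiffAt ℝ 2 u z)
    (hφ : ∀ᶠ t in 𝓝 (u z), HasDerivAt φ (φ' t) t) (hφ' : HasDerivAt φ' φ'' (u z)) (d : E) :
    fderiv ℝ (fun w => fderiv ℝ (fun x => φ (u x)) w d) z d
      = φ' (u z) * fderiv ℝ (fun w => fderiv ℝ u w d) z d + φ'' * fderiv ℝ u z d ^ 2 := by
  have hfirst : (fun w => fderiv ℝ (fun x => φ (u x)) w d)
      =ᶠ[𝓝 z] fun w => φ' (u w) * fderiv ℝ u w d := by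
    filter_upwards [hu.eventually_differentiableAt, hu.continuousAt.eventually hφ]
      with w huw hφw
    have hcomp : HasFDerivAt (fun x => φ (u x)) (φ' (u w) • fderiv ℝ u w) w :=
      hφw.comp_hasFDerivAt w huw.hasFDerivAt
    simp [hcomp.fderiv]
  have hsecond : HasFDerivAt (fun w => φ' (u w) * fderiv ℝ u w d)
      (φ' (u z) • fderiv ℝ (fun w => fderiv ℝ u w d) z + fderiv ℝ u z d • φ'' • fderiv ℝ u z) z :=
    (hφ'.comp_hasFDerivAt z (hu.differentiableAt (by norm_num)).hasFDerivAt).mul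
      (hu.differentiableAt_fderiv_apply d).hasFDerivAt
  rw [hfirst.fderiv_eq, hsecond.fderiv]
  simp only [add_apply, smul_apply, smul_eq_mul]
  ring

theorem fderiv_sq_add_sq_apply (hu : DifferentiableAt ℝ u z) (hv : DifferentiableAt ℝ v z)
    (d : E) : fderiv ℝ (fun w => u w ^ 2 + v w ^ 2) z d
      = 2 * (u z * fderiv ℝ u z d + v z * fderiv ℝ v z d) := by
  rw [fderiv_fun_add (hu.fun_pow 2) (hv.fun_pow 2), fderiv_fun_pow 2 hu, fderiv_fun_pow 2 hv]
  simp only [Nat.add_one_sub_one, pow_one, nsmul_eq_mul, Nat.cast_ofNat,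
    add_apply, smul_apply, smul_eq_mul]
  ring

end DirectionalDerivative

section Laplacian

variable {u v : ℂ → ℝ} {z : ℂ}

theorem lap_add (hu : ContDiffAt ℝ 2 u z) (hv : ContDiffAt ℝ 2 v z) :
    lap (fun w => u w + v w) z = lap u z + lap v z := by
  unfold lap pdx pdy
  rw [fderiv_fderiv_add_apply hu hv, fderiv_fderiv_add_apply hu hv]
  ring

theorem lap_comp {φ φ' : ℝ → ℝ} {φ'' : ℝ} (hu : ContDiffAt ℝ 2 u z)
    (hφ : ∀ᶠ t in 𝓝 (u z), HasDerivAt φ (φ' t) t) (hφ' : HasDerivAt φ' φ'' (u z)) :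
    lap (fun w => φ (u w)) z = φ' (u z) * lap u z + φ'' * (pdx u z ^ 2 + pdy u z ^ 2) := by
  unfold lap pdx pdy
  rw [fderiv_fderiv_comp_apply hu hφ hφ', fderiv_fderiv_comp_apply hu hφ hφ']
  ring

theorem lap_sq (hu : ContDiffAt ℝ 2 u z) :
    lap (fun w => u w ^ 2) z = 2 * u z * lap u z + 2 * (pdx u z ^ 2 + pdy u z ^ 2) :=
  lap_comp hu (.of_forall fun t => by simpa using hasDerivAt_pow 2 t)
    (by simpa using (hasDerivAt_id (u z)).const_mul (2 : ℝ))

theorem lap_half_log_sq_add_sq (hu : ContDiffAt ℝ 2 u z) (hv : ContDiffAt ℝ 2 v z)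
    (hu₀ : lap u z = 0) (hv₀ : lap v z = 0) (hpos : 0 < u z ^ 2 + v z ^ 2) :
    lap (fun w => 1 / 2 * Real.log (u w ^ 2 + v w ^ 2)) z
      = (pdx u z ^ 2 + pdy u z ^ 2 + (pdx v z ^ 2 + pdy v z ^ 2)) / (u z ^ 2 + v z ^ 2)
        - 2 * ((u z * pdx u z + v z * pdx v z) ^ 2 + (u z * pdy u z + v z * pdy v z) ^ 2)
          / (u z ^ 2 + v z ^ 2) ^ 2 := by
  have hlog : ∀ᶠ t in 𝓝 (u z ^ 2 + v z ^ 2),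
      HasDerivAt (fun s => 1 / 2 * Real.log s) (1 / 2 * t⁻¹) t :=
    (lt_mem_nhds hpos).mono fun t ht => (Real.hasDerivAt_log ht.ne').const_mul _
  rw [lap_comp ((hu.pow 2).add (hv.pow 2)) hlog
    ((hasDerivAt_inv hpos.ne').const_mul _), lap_add (hu.pow 2) (hv.pow 2), lap_sq hu, lap_sq hv]
  simp only [pdx, pdy, fderiv_sq_add_sq_apply (hu.differentiableAt (by norm_num))
    (hv.differentiableAt (by norm_num)), hu₀, hv₀]
  field_simp
  ring

end Laplacian

theorem contDiff_neg_mul_arctan_add_half_log {n : WithTop ℕ∞} :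
    ContDiff ℝ n fun s : ℝ => -s * Real.arctan s + 1 / 2 * Real.log (s ^ 2 + 1) :=
  (contDiff_id.neg.mul Real.contDiff_arctan).add
    (contDiff_const.mul ((contDiff_id.pow 2).add contDiff_const |>.log fun s => by positivity))

theorem hasDerivAt_neg_mul_arctan_add_half_log (t : ℝ) :
    HasDerivAt (fun s => -s * Real.arctan s + 1 / 2 * Real.log (s ^ 2 + 1))
      (-Real.arctan t) t := by
  have hlog : HasDerivAt (fun s => Real.log (s ^ 2 + 1)) (2 * t / (t ^ 2 + 1)) t := by
    simpa using ((hasDerivAt_pow 2 t).add_const 1).log (by positivity)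
  refine (((hasDerivAt_neg' t).mul (Real.hasDerivAt_arctan t)).add
    (hlog.const_mul (1 / 2))).congr_deriv ?_
  field_simp
  ring

theorem sq_add_sq_mul_sub_le_of_orthogonal {a₁ a₂ a₃ b₁ b₂ b₃ x₁ x₂ l : ℝ}
    (hab : a₁ * b₁ + a₂ * b₂ + a₃ * b₃ = 0) (ha : a₁ ^ 2 + a₂ ^ 2 + a₃ ^ 2 = l ^ 2)
    (hb : b₁ ^ 2 + b₂ ^ 2 + b₃ ^ 2 = l ^ 2) (hl : l ≠ 0) :
    (x₁ ^ 2 + x₂ ^ 2) * (l ^ 2 - (a₃ ^ 2 + b₃ ^ 2))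
      ≤ (x₁ * a₁ + x₂ * a₂) ^ 2 + (x₁ * b₁ + x₂ * b₂) ^ 2 := by
  -- Lagrange's identity for `a`, `b` and `w = a × b`; the square on the right is `(x₁w₂ - x₂w₁)²`.
  have key : l ^ 2 * ((x₁ * a₁ + x₂ * a₂) ^ 2 + (x₁ * b₁ + x₂ * b₂) ^ 2
      - (x₁ ^ 2 + x₂ ^ 2) * (l ^ 2 - (a₃ ^ 2 + b₃ ^ 2)))
      = (x₁ * (a₃ * b₁ - a₁ * b₃) - x₂ * (a₂ * b₃ - a₃ * b₂)) ^ 2 := by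
    linear_combination
      (2 * (x₁ ^ 2 + x₂ ^ 2) * a₃ * b₃ - (x₁ ^ 2 + x₂ ^ 2) * (a₁ * b₁ + a₂ * b₂ + a₃ * b₃)
        + 2 * (x₁ * a₁ + x₂ * a₂) * (x₁ * b₁ + x₂ * b₂)) * hab
      + (-(x₁ * b₁ + x₂ * b₂) ^ 2 + (x₁ ^ 2 + x₂ ^ 2) * l ^ 2 - (x₁ ^ 2 + x₂ ^ 2) * b₃ ^ 2) * ha
      + (-(x₁ * a₁ + x₂ * a₂) ^ 2 + (x₁ ^ 2 + x₂ ^ 2) * (a₁ ^ 2 + a₂ ^ 2 + a₃ ^ 2)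
        - (x₁ ^ 2 + x₂ ^ 2) * a₃ ^ 2) * hb
  have := nonneg_of_mul_nonneg_right (key ▸ sq_nonneg _) (by positivity : (0 : ℝ) < l ^ 2)
  linarith

theorem div_sub_div_le_div_of_orthogonal {a₁ a₂ a₃ b₁ b₂ b₃ x₁ x₂ x₃ l : ℝ}
    (hab : a₁ * b₁ + a₂ * b₂ + a₃ * b₃ = 0) (ha : a₁ ^ 2 + a₂ ^ 2 + a₃ ^ 2 = l ^ 2)
    (hb : b₁ ^ 2 + b₂ ^ 2 + b₃ ^ 2 = l ^ 2) (hl : l ≠ 0) (hx : 1 + x₃ ^ 2 ≤ x₁ ^ 2 + x₂ ^ 2) :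
    (a₁ ^ 2 + b₁ ^ 2 + (a₂ ^ 2 + b₂ ^ 2)) / (x₁ ^ 2 + x₂ ^ 2)
        - 2 * ((x₁ * a₁ + x₂ * a₂) ^ 2 + (x₁ * b₁ + x₂ * b₂) ^ 2) / (x₁ ^ 2 + x₂ ^ 2) ^ 2
      ≤ (a₃ ^ 2 + b₃ ^ 2) / (1 + x₃ ^ 2) := by
  set R := x₁ ^ 2 + x₂ ^ 2
  set T := a₃ ^ 2 + b₃ ^ 2
  have hP : 0 < 1 + x₃ ^ 2 := by positivity
  have hR : 0 < R := hP.trans_le hx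
  have hproj := sq_add_sq_mul_sub_le_of_orthogonal (x₁ := x₁) (x₂ := x₂) hab ha hb hl
  calc (a₁ ^ 2 + b₁ ^ 2 + (a₂ ^ 2 + b₂ ^ 2)) / R
        - 2 * ((x₁ * a₁ + x₂ * a₂) ^ 2 + (x₁ * b₁ + x₂ * b₂) ^ 2) / R ^ 2
      ≤ (2 * l ^ 2 - T) / R - 2 * (R * (l ^ 2 - T)) / R ^ 2 := by
        have hS : a₁ ^ 2 + b₁ ^ 2 + (a₂ ^ 2 + b₂ ^ 2) = 2 * l ^ 2 - T := by linarith
        rw [hS]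
        gcongr
    _ = T / R := by field_simp; ring
    _ ≤ T / (1 + x₃ ^ 2) := by gcongr

/-- For a conformal harmonic immersion `X = (X₁, X₂, X₃)` on `U` with
`X₁² + X₂² ≥ 1 + X₃²` on `U`, and `f(t) = −t·arctan t + ½ log(t² + 1)`, the function
`h_c = ½ log(X₁² + X₂²) + c·X₃ + f(X₃)` is superharmonic on `U` for every real `c`. -/
theorem h_c_superharmonic
    (U : Set ℂ) (hU : IsOpen U) (X₁ X₂ X₃ : ℂ → ℝ)
    (hsm₁ : ContDiffOn ℝ (⊤ : ℕ∞) X₁ U) (hsm₂ : ContDiffOn ℝ (⊤ : ℕ∞) X₂ U)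
    (hsm₃ : ContDiffOn ℝ (⊤ : ℕ∞) X₃ U)
    (hharm : ∀ z ∈ U, lap X₁ z = 0 ∧ lap X₂ z = 0 ∧ lap X₃ z = 0)
    (lam : ℂ → ℝ)
    (hconf : ∀ z ∈ U,
      pdx X₁ z * pdy X₁ z + pdx X₂ z * pdy X₂ z + pdx X₃ z * pdy X₃ z = 0)
    (hnormx : ∀ z ∈ U, (pdx X₁ z) ^ 2 + (pdx X₂ z) ^ 2 + (pdx X₃ z) ^ 2 = (lam z) ^ 2)
    (hnormy : ∀ z ∈ U, (pdy X₁ z) ^ 2 + (pdy X₂ z) ^ 2 + (pdy X₃ z) ^ 2 = (lam z) ^ 2)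
    (hlam : ∀ z ∈ U, 0 < lam z)
    (hbig : ∀ z ∈ U, 1 + (X₃ z) ^ 2 ≤ (X₁ z) ^ 2 + (X₂ z) ^ 2)
    (f : ℝ → ℝ)
    (hf : ∀ t, f t = -t * Real.arctan t + (1 / 2) * Real.log (t ^ 2 + 1))
    (c : ℝ) :
    ∀ z ∈ U,
      lap (fun w => (1 / 2) * Real.log ((X₁ w) ^ 2 + (X₂ w) ^ 2)
            + c * X₃ w + f (X₃ w)) z ≤ 0 := by
  intro z hz
  have hC2 {u : ℂ → ℝ} (hu : ContDiffOn ℝ (⊤ : ℕ∞) u U) : ContDiffAt ℝ 2 u z :=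
    (hu.contDiffAt (hU.mem_nhds hz)).of_le (WithTop.coe_le_coe.2 le_top)
  obtain ⟨h₁, h₂, h₃⟩ := hharm z hz
  have hpos : 0 < X₁ z ^ 2 + X₂ z ^ 2 := lt_of_lt_of_le (by positivity) (hbig z hz)
  have hf_eq : f = fun s => -s * Real.arctan s + 1 / 2 * Real.log (s ^ 2 + 1) := funext hf
  have hg (t : ℝ) : HasDerivAt (fun s => c * s + f s) (c - Real.arctan t) t :=
    (((hasDerivAt_id' t).const_mul c).add
      (hf_eq ▸ hasDerivAt_neg_mul_arctan_add_half_log t)).congr_deriv (by ring)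
  have hlog_C2 : ContDiffAt ℝ 2 (fun w => 1 / 2 * Real.log (X₁ w ^ 2 + X₂ w ^ 2)) z :=
    contDiffAt_const.mul ((((hC2 hsm₁).pow 2).add ((hC2 hsm₂).pow 2)).log hpos.ne')
  have hg_C2 : ContDiffAt ℝ 2 (fun w => c * X₃ w + f (X₃ w)) z :=
    (contDiffAt_const.mul (hC2 hsm₃)).add
      ((hf_eq ▸ contDiff_neg_mul_arctan_add_half_log).contDiffAt.comp z (hC2 hsm₃))
  simp only [add_assoc]
  rw [lap_add hlog_C2 hg_C2, lap_half_log_sq_add_sq (hC2 hsm₁) (hC2 hsm₂) h₁ h₂ hpos,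
    lap_comp (hC2 hsm₃) (.of_forall hg) ((Real.hasDerivAt_arctan _).const_sub c), h₃,
    mul_zero, zero_add, neg_mul, one_div_mul_eq_div, ← sub_eq_add_neg, sub_nonpos]
  exact div_sub_div_le_div_of_orthogonal (hconf z hz) (hnormx z hz) (hnormy z hz) (hlam z hz).ne'
    (hbig z hz)
end
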